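/- Let X be a type, f : X → ℝ, and g, w : X × X → ℝ with g(x, y) = −g(y, x) and w(x, y) = w(y, x) for all x, y ∈ X, and |s(f(x) − f(x')) − s(g(x, x'))| ≤ w(x, x') for all x, x' ∈ X. Define the plausible maximizer set M = { x ∈ X : ∀ x' ∈ X, s(g(x, x')) + w(x, x') ≥ 1/2 }. Let c ≥ 0 and set κ = 1/(s(c)·(1 − s(c))). Suppose x* ∈ X satisfies f(x) ≤ f(x*) for all x ∈ X, and suppose x_t, x_t' ∈ M satisfy: (i) w(x_t, x_t) = 0; (ii) x_t' minimizes the lower confidence bound against x_t over M, i.e., s(g(x_t, x_t')) − w(x_t, x_t') ≤ s(g(x_t, x')) − w(x_t, x') for every x' ∈ M; and (iii) 0 ≤ f(x_t) − f(x_t') ≤ c. Then s(f(x*) − f(x_t)) + s(f(x*) − f(x_t')) − 1 ≤ (4 + κ)·w(x_t, x_t'). -/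

import Mathlib

noncomputable def sigmoid (z : ℝ) : ℝ := 1 / (1 + Real.exp (-z))

/-!
Write `z = f xt - f xt'` and `W = w xt xt'`. Since `x*` is a plausible maximizer, the choice of
`xt'` compares it with `x*`, and validity of the confidence bounds turns this into
`s(f x* - f xt) ≤ 1 - s(z) + 2W`. Since `xt'` is a plausible maximizer too, `s(z) ≤ 1/2 + 2W`;
as `s` grows at rate at least `s(c)(1 - s(c)) = 1/κ` on `[0, c]`, this gives `z ≤ 2κW`.
Finally `s` is `1/4`-Lipschitz, so `s(f x* - f xt') ≤ s(f x* - f xt) + z/4`, and the regret is at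
most `1 - 2 s(z) + 4W + z/4 ≤ (4 + κ/2) W`.
-/

lemma sigmoid_eq_real_sigmoid : sigmoid = Real.sigmoid := by
  funext z
  rw [sigmoid, Real.sigmoid_def, one_div]

namespace Real

lemma half_le_sigmoid {x : ℝ} (hx : 0 ≤ x) : 1 / 2 ≤ sigmoid x := by
  simpa [sigmoid_zero] using sigmoid_le hx

lemma sigmoid_sub_sigmoid_le {x y : ℝ} (hxy : x ≤ y) : sigmoid y - sigmoid x ≤ (y - x) / 4 := by
  have hderiv : ∀ t, deriv sigmoid t ≤ 1 / 4 := fun t ↦ by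
    rw [deriv_sigmoid]
    nlinarith [sq_nonneg (sigmoid t - 1 / 2)]
  linarith [image_sub_le_mul_sub_of_deriv_le differentiable_sigmoid hderiv hxy]

/-- On `[0, c]` the derivative `s (1 - s)` of the sigmoid is smallest at `c`. -/
lemma sigmoid_mul_one_sub_sigmoid_mul_le {x c : ℝ} (hx : 0 ≤ x) (hxc : x ≤ c) :
    sigmoid c * (1 - sigmoid c) * x ≤ sigmoid x - 1 / 2 := by
  have hderiv : ∀ t ∈ interior (Set.Icc 0 c), sigmoid c * (1 - sigmoid c) ≤ deriv sigmoid t := by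
    intro t ht
    rw [interior_Icc] at ht
    have hhalf := half_le_sigmoid ht.1.le
    have hmono := sigmoid_le ht.2.le
    rw [deriv_sigmoid]
    nlinarith [sigmoid_lt_one c]
  have := (convex_Icc 0 c).mul_sub_le_image_sub_of_le_deriv continuous_sigmoid.continuousOn
    differentiable_sigmoid.differentiableOn hderiv 0 ⟨le_rfl, hx.trans hxc⟩ x ⟨hx, hxc⟩ hx
  simpa [sigmoid_zero] using this

end Real

section Dueling

variable {X : Type*}

def plausibleMaximizers (g w : X → X → ℝ) : Set X :=
  {x | ∀ x', 1 / 2 ≤ Real.sigmoid (g x x') + w x x'}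

variable {f : X → ℝ} {g w : X → X → ℝ}

lemma mem_plausibleMaximizers_of_isMax
    (hconf : ∀ x x', |Real.sigmoid (f x - f x') - Real.sigmoid (g x x')| ≤ w x x')
    {xstar : X} (hstar : ∀ x, f x ≤ f xstar) : xstar ∈ plausibleMaximizers g w := fun x' ↦ by
  have hhalf := Real.half_le_sigmoid (sub_nonneg.mpr (hstar x'))
  linarith [(abs_le.mp (hconf xstar x')).2]

lemma sigmoid_le_half_add_of_mem_plausibleMaximizers (hg : ∀ x y, g x y = -g y x)
    (hw : ∀ x y, w x y = w y x) (x : X) {x' : X} (hx' : x' ∈ plausibleMaximizers g w) :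
    Real.sigmoid (g x x') ≤ 1 / 2 + w x x' := by
  have := hx' x
  rw [hg, Real.sigmoid_neg, hw] at this
  linarith

end Dueling

theorem maxminlcb_single_step_dueling_regret_general
    (X : Type*) (f : X → ℝ) (g w : X → X → ℝ)
    (hg : ∀ x y, g x y = -g y x) (hw : ∀ x y, w x y = w y x)
    (hconf : ∀ x x', |sigmoid (f x - f x') - sigmoid (g x x')| ≤ w x x')
    (M : Set X)
    (hM : M = {x : X | ∀ x', 1 / 2 ≤ sigmoid (g x x') + w x x'})
    (c κ : ℝ) (hκ : κ = 1 / (sigmoid c * (1 - sigmoid c)))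
    (xstar : X) (hstar : ∀ x, f x ≤ f xstar)
    (xt xt' : X) (hxt' : xt' ∈ M)
    (hmin : ∀ x' ∈ M, sigmoid (g xt xt') - w xt xt' ≤ sigmoid (g xt x') - w xt x')
    (hgap0 : 0 ≤ f xt - f xt') (hgapc : f xt - f xt' ≤ c) :
    sigmoid (f xstar - f xt) + sigmoid (f xstar - f xt') - 1 ≤ (4 + κ) * w xt xt' := by
  rw [sigmoid_eq_real_sigmoid] at *
  change M = plausibleMaximizers g w at hM
  subst hM
  have hconf_t := (abs_le.mp (hconf xt xt')).2
  have hregret_t :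
      Real.sigmoid (f xstar - f xt) ≤ 1 - Real.sigmoid (f xt - f xt') + 2 * w xt xt' := by
    have hmin_star := hmin xstar (mem_plausibleMaximizers_of_isMax hconf hstar)
    have hflip : Real.sigmoid (f xt - f xstar) = 1 - Real.sigmoid (f xstar - f xt) := by
      rw [← Real.sigmoid_neg, neg_sub]
    linarith [(abs_le.mp (hconf xt xstar)).1, hconf_t]
  have hgap_sigmoid : Real.sigmoid (f xt - f xt') ≤ 1 / 2 + 2 * w xt xt' := by
    linarith [sigmoid_le_half_add_of_mem_plausibleMaximizers hg hw xt hxt', hconf_t]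
  have hslope : 0 < Real.sigmoid c * (1 - Real.sigmoid c) :=
    mul_pos (Real.sigmoid_pos c) (sub_pos.mpr (Real.sigmoid_lt_one c))
  have hgap : f xt - f xt' ≤ 2 * κ * w xt xt' := by
    rw [hκ, mul_one_div, div_mul_eq_mul_div, le_div_iff₀ hslope]
    linarith [Real.sigmoid_mul_one_sub_sigmoid_mul_le hgap0 hgapc]
  have hlip := Real.sigmoid_sub_sigmoid_le (show f xstar - f xt ≤ f xstar - f xt' by linarith)
  linarith [Real.half_le_sigmoid hgap0]

theorem maxminlcb_single_step_dueling_regret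
    (X : Type*) (f : X → ℝ) (g w : X → X → ℝ)
    (hg : ∀ x y, g x y = -g y x) (hw : ∀ x y, w x y = w y x)
    (hconf : ∀ x x', |sigmoid (f x - f x') - sigmoid (g x x')| ≤ w x x')
    (M : Set X)
    (hM : M = {x : X | ∀ x', 1 / 2 ≤ sigmoid (g x x') + w x x'})
    (c κ : ℝ) (hc : 0 ≤ c) (hκ : κ = 1 / (sigmoid c * (1 - sigmoid c)))
    (xstar : X) (hstar : ∀ x, f x ≤ f xstar)
    (xt xt' : X) (hxt : xt ∈ M) (hxt' : xt' ∈ M)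
    (hw0 : w xt xt = 0)
    (hmin : ∀ x' ∈ M, sigmoid (g xt xt') - w xt xt' ≤ sigmoid (g xt x') - w xt x')
    (hgap0 : 0 ≤ f xt - f xt') (hgapc : f xt - f xt' ≤ c) :
    sigmoid (f xstar - f xt) + sigmoid (f xstar - f xt') - 1 ≤ (4 + κ) * w xt xt' :=
  maxminlcb_single_step_dueling_regret_general X f g w hg hw hconf M hM c κ hκ xstar hstar xt xt'
    hxt' hmin hgap0 hgapc
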